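/- arXiv:2009.10665 — 3 statements merged into one kernel-verified Lean document; each statement's English description precedes it below -/
import Mathlib

section
/- Let 0 ≤ e < 1, η = √(1−e²), and define the mean anomaly as a function of the true anomaly by ℓ_e(f) = f − 2·arctan( e·sin f / (1 + η + e·cos f) ) − e·η·sin f / (1 + e·cos f). Then ℓ_e is differentiable on ℝ with ℓ_e′(f) = η³/(1 + e·cos f)² for every f ∈ ℝ (the Keplerian differential relation η a² dℓ = r² df), ℓ_e(0) = 0, and ℓ_e(f + 2π) = ℓ_e(f) + 2π for every f ∈ ℝ. -/
/-!
The first two terms of `ℓ_e` are the eccentric anomaly `E(f)` (the half-angle form of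
`tan (E/2) = √((1-e)/(1+e)) tan (f/2)`) and the last one is `e sin E`, so `ℓ_e = E - e sin E`
is Kepler's equation. Differentiating, `E' = η / (1 + e cos f)` and
`(e sin E)' = e η (cos f + e) / (1 + e cos f)²`, whose difference is `η (1 - e²) / (1 + e cos f)²`.
-/

open Real

lemma one_add_mul_cos_pos {e : ℝ} (he : |e| < 1) (x : ℝ) : 0 < 1 + e * cos x := by
  have h := neg_abs_le (e * cos x)
  rw [abs_mul] at h
  nlinarith [abs_cos_le_one x, abs_nonneg e]

noncomputable def eccentricAnomaly (e η f : ℝ) : ℝ :=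
  f - 2 * arctan (e * sin f / (1 + η + e * cos f))

lemma hasDerivAt_mul_sin_div_one_add_mul_cos {e : ℝ} (k : ℝ) {x : ℝ} (hx : 1 + e * cos x ≠ 0) :
    HasDerivAt (fun y => k * sin y / (1 + e * cos y))
      (k * (cos x + e) / (1 + e * cos x) ^ 2) x := by
  have h : HasDerivAt (fun y => k * sin y / (1 + e * cos y)) _ x :=
    ((hasDerivAt_sin x).const_mul k).div (((hasDerivAt_cos x).const_mul e).const_add 1) hx
  refine h.congr_deriv ?_
  congr 1
  linear_combination k * e * sin_sq_add_cos_sq x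

lemma hasDerivAt_eccentricAnomaly {e η : ℝ} (hη2 : η ^ 2 = 1 - e ^ 2) (hη : 0 ≤ η)
    (he : |e| < 1) (x : ℝ) :
    HasDerivAt (eccentricAnomaly e η) (η / (1 + e * cos x)) x := by
  have hr := one_add_mul_cos_pos he x
  have hd : 0 < 1 + η + e * cos x := by linarith
  have hu : HasDerivAt (fun y => e * sin y / (1 + η + e * cos y)) _ x :=
    ((hasDerivAt_sin x).const_mul e).div
      (((hasDerivAt_cos x).const_mul e).const_add (1 + η)) hd.ne'
  refine ((hasDerivAt_id x).sub (hu.arctan.const_mul 2)).congr_deriv ?_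
  have h1η : 1 + η ≠ 0 := by positivity
  field_simp
  -- `(1 + η + e cos x)² + e² sin² x = 2 (1 + η) (1 + e cos x)` since `η² = 1 - e²`
  linear_combination (-(η * e ^ 2 + e ^ 2 + e ^ 3 * cos x)) * sin_sq_add_cos_sq x
    - (1 + η + e * cos x) * hη2

/-- For `0 ≤ e < 1` and `η = √(1−e²)`, the mean anomaly expressed
through the true anomaly,
`ℓ_e(f) = f − 2·arctan(e·sin f/(1+η+e·cos f)) − e·η·sin f/(1+e·cos f)`,
is differentiable on ℝ with derivative `η³/(1+e·cos f)²` (the Keplerian differential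
relation `η a² dℓ = r² df`), satisfies `ℓ_e 0 = 0`, and `ℓ_e (f+2π) = ℓ_e f + 2π`. -/
theorem brouwer_mean_anomaly_properties
    (e η : ℝ) (he0 : 0 ≤ e) (he1 : e < 1)
    (hη : η = Real.sqrt (1 - e ^ 2))
    (ℓ : ℝ → ℝ)
    (hℓ : ∀ f : ℝ, ℓ f =
      f - 2 * Real.arctan (e * Real.sin f / (1 + η + e * Real.cos f))
        - e * η * Real.sin f / (1 + e * Real.cos f)) :
    (∀ f : ℝ, HasDerivAt ℓ (η ^ 3 / (1 + e * Real.cos f) ^ 2) f) ∧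
    ℓ 0 = 0 ∧
    (∀ f : ℝ, ℓ (f + 2 * Real.pi) = ℓ f + 2 * Real.pi) := by
  have he : |e| < 1 := abs_lt.mpr ⟨by linarith, he1⟩
  have hη2 : η ^ 2 = 1 - e ^ 2 := hη ▸ sq_sqrt (by nlinarith)
  have hℓE : ℓ = fun f => eccentricAnomaly e η f - e * η * sin f / (1 + e * cos f) :=
    funext hℓ
  refine ⟨fun f => ?_, by simp [hℓ], fun f => ?_⟩
  · have hr := (one_add_mul_cos_pos he f).ne'
    rw [hℓE]
    refine ((hasDerivAt_eccentricAnomaly hη2 (hη ▸ sqrt_nonneg _) he f).sub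
      (hasDerivAt_mul_sin_div_one_add_mul_cos (e * η) hr)).congr_deriv ?_
    field_simp
    linear_combination -η * hη2
  · rw [hℓ, hℓ, sin_add_two_pi, cos_add_two_pi]
    ring
end

section
/- (Choice of the first-order integration constant cancels the long-period second-order term.) Let μ > 0, R > 0, L > 0, 0 < G ≤ L, and s ∈ ℝ with 5s² − 4 ≠ 0. Set η = G/L, e = √(1 − η²), p = G²/μ, H₀₀ = −μ²/(2L²), and define C₁(g) = G·(R²/p²)·( (15s² − 14)·s²·e² / (32·(5s² − 4)) )·sin 2g. Then for every g ∈ ℝ: −H₀₀·(R²/p²)·3·(5s² − 4)·(1/L)·C₁′(g) + H₀₀·(R⁴/p⁴)·(3/16)·η·(15s² − 14)·s²·e²·cos 2g = 0. -/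
open Real

/-! Differentiating `C₁` gives `2 K cos 2g` with `K` its amplitude; the factor
`3 (5s² - 4) · 2 / 32 = (3/16) (5s² - 4)` then cancels the denominator of `K`, and
`G / L = η` turns the first term into the negative of the second. -/

theorem deriv_const_mul_sin_two_mul (A g : ℝ) :
    deriv (fun x : ℝ => A * sin (2 * x)) g = A * (2 * cos (2 * g)) := by
  have hsin : HasDerivAt (fun x : ℝ => sin (2 * x)) (cos (2 * g) * 2) g :=
    (hasDerivAt_sin (2 * g)).comp g ((hasDerivAt_id g).const_mul 2 |>.congr_deriv (mul_one 2))
  rw [(hsin.const_mul A).deriv, mul_comm (cos _)]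

theorem first_order_constant_cancels_long_period_general
    (R L G s : ℝ)
    (hs : 5 * s ^ 2 - 4 ≠ 0)
    (η e p H00 : ℝ)
    (hη : η = G / L)
    (C₁ : ℝ → ℝ)
    (hC₁ : ∀ g : ℝ, C₁ g =
      G * (R ^ 2 / p ^ 2) *
        ((15 * s ^ 2 - 14) * s ^ 2 * e ^ 2 / (32 * (5 * s ^ 2 - 4))) *
        Real.sin (2 * g)) :
    ∀ g : ℝ,
      -H00 * (R ^ 2 / p ^ 2) * 3 * (5 * s ^ 2 - 4) * (1 / L) * deriv C₁ g +
        H00 * (R ^ 4 / p ^ 4) * (3 / 16) * η * (15 * s ^ 2 - 14) * s ^ 2 * e ^ 2 *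
          Real.cos (2 * g)
      = 0 := by
  intro g
  rw [funext hC₁, deriv_const_mul_sin_two_mul, hη]
  field_simp
  ring

/-- (Choice of the first-order integration constant cancels the
long-period second-order term.) -/
theorem first_order_constant_cancels_long_period
    (μ R L G s : ℝ)
    (hμ : 0 < μ) (hR : 0 < R) (hL : 0 < L) (hG0 : 0 < G) (hGL : G ≤ L)
    (hs : 5 * s ^ 2 - 4 ≠ 0)
    (η e p H00 : ℝ)
    (hη : η = G / L)
    (he : e = Real.sqrt (1 - η ^ 2))
    (hp : p = G ^ 2 / μ)
    (hH00 : H00 = -μ ^ 2 / (2 * L ^ 2))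
    (C₁ : ℝ → ℝ)
    (hC₁ : ∀ g : ℝ, C₁ g =
      G * (R ^ 2 / p ^ 2) *
        ((15 * s ^ 2 - 14) * s ^ 2 * e ^ 2 / (32 * (5 * s ^ 2 - 4))) *
        Real.sin (2 * g)) :
    ∀ g : ℝ,
      -H00 * (R ^ 2 / p ^ 2) * 3 * (5 * s ^ 2 - 4) * (1 / L) * deriv C₁ g +
        H00 * (R ^ 4 / p ^ 4) * (3 / 16) * η * (15 * s ^ 2 - 14) * s ^ 2 * e ^ 2 *
          Real.cos (2 * g)
      = 0 :=
  first_order_constant_cancels_long_period_general R L G s hs η e p H00 hη C₁ hC₁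
end

section
/- (Choice of the second-order integration constant cancels the long-period third-order terms.) Let μ > 0, R > 0, L > 0, 0 < G ≤ L, and s ∈ ℝ with 5s² − 4 ≠ 0. Set η = G/L, e = √(1 − η²), p = G²/μ, H₀₀ = −μ²/(2L²), and define the inclination polynomials β₁,₀ = 525s⁶ − 3930s⁴ + 5632s² − 2256, β₁,₁ = 5925s⁶ − 16170s⁴ + 14848s² − 4560, β₁,₂ = (14 − 15s²)(75s⁴ − 212s² + 120), β₁,₃ = (15s² − 14)(45s⁴ + 36s² − 56), β₂,₀ = (15s² − 14)²(15s² − 13). Define C₂(g) = G·(R⁴/p⁴)·(1/256)·[ ( s²·e²·(β₁,₀ + β₁,₁·η + β₁,₂·η² + β₁,₃·η³) / ( 2·(5s² − 4)²·(1 + η) ) )·sin 2g + ( s⁴·e⁴·β₂,₀ / ( 4·(5s² − 4)³ ) )·sin 4g ]. Then for every g ∈ ℝ: −H₀₀·(R²/p²)·(9/2)·(5s² − 4)·(1/L)·C₂′(g) + H₀₀·(R⁶/p⁶)·(9/512)·η·[ ( s²·e²·(β₁,₀ + β₁,₁·η + β₁,₂·η² + β₁,₃·η³) / ( (5s² − 4)·(1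 + η) ) )·cos 2g + ( s⁴·e⁴·β₂,₀ / (5s² − 4)² )·cos 4g ] = 0. -/
open Real

/-! Differentiating `C₂` multiplies its `sin 2g` and `sin 4g` amplitudes by `2` and `4`; with
`G / L = η` and one factor `5s² − 4` cancelling against the denominators, the first term becomes
exactly the negative of the long-period bracket. -/

theorem hasDerivAt_mul_sin_add_mul_sin (a b m n x : ℝ) :
    HasDerivAt (fun y => a * sin (m * y) + b * sin (n * y))
      (a * m * cos (m * x) + b * n * cos (n * x)) x := by
  have hsin (c : ℝ) : HasDerivAt (fun y => sin (c * y)) (cos (c * x) * c) x := by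
    simpa using ((hasDerivAt_id x).const_mul c).sin
  exact (((hsin m).const_mul a).add ((hsin n).const_mul b)).congr_deriv (by ring)

-- No `k ≠ 0` needed: at `k = 0` both sides vanish because `x / 0 = 0`.
theorem mul_div_pow_succ_succ {K : Type*} [Field K] (k x : K) (n : ℕ) :
    k * (x / k ^ (n + 2)) = x / k ^ (n + 1) := by
  rcases eq_or_ne k 0 with rfl | hk
  · simp
  · field_simp
    ring

theorem second_order_constant_cancels_long_period_general
    (R L G s : ℝ)
    (η e p H00 : ℝ)
    (hη : η = G / L)
    (β₁₀ β₁₁ β₁₂ β₁₃ β₂₀ : ℝ)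
    (C₂ : ℝ → ℝ)
    (hC₂ : ∀ g : ℝ, C₂ g =
      G * (R ^ 4 / p ^ 4) * (1 / 256) *
        ((s ^ 2 * e ^ 2 * (β₁₀ + β₁₁ * η + β₁₂ * η ^ 2 + β₁₃ * η ^ 3) /
            (2 * (5 * s ^ 2 - 4) ^ 2 * (1 + η))) * Real.sin (2 * g) +
          (s ^ 4 * e ^ 4 * β₂₀ / (4 * (5 * s ^ 2 - 4) ^ 3)) * Real.sin (4 * g))) :
    ∀ g : ℝ,
      -H00 * (R ^ 2 / p ^ 2) * (9 / 2) * (5 * s ^ 2 - 4) * (1 / L) * deriv C₂ g +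
        H00 * (R ^ 6 / p ^ 6) * (9 / 512) * η *
          ((s ^ 2 * e ^ 2 * (β₁₀ + β₁₁ * η + β₁₂ * η ^ 2 + β₁₃ * η ^ 3) /
              ((5 * s ^ 2 - 4) * (1 + η))) * Real.cos (2 * g) +
            (s ^ 4 * e ^ 4 * β₂₀ / (5 * s ^ 2 - 4) ^ 2) * Real.cos (4 * g))
      = 0 := by
  intro g
  -- `k` and `A` become atoms, so that `ring` does not expand `(5s² − 4)²` under an inverse.
  generalize 5 * s ^ 2 - 4 = k at hC₂ ⊢
  simp only [div_mul_eq_div_div_swap _ _ (1 + η)] at hC₂ ⊢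
  generalize s ^ 2 * e ^ 2 * (β₁₀ + β₁₁ * η + β₁₂ * η ^ 2 + β₁₃ * η ^ 3) / (1 + η) = A at hC₂ ⊢
  set B := s ^ 4 * e ^ 4 * β₂₀
  set c := G * (R ^ 4 / p ^ 4) * (1 / 256)
  set D := H00 * (R ^ 2 / p ^ 2) * (9 / 2) * (1 / L) * c
  have hC : C₂ = fun x => c * (A / (2 * k ^ 2)) * sin (2 * x) + c * (B / (4 * k ^ 3)) * sin (4 * x) :=
    funext fun x => by rw [hC₂]; ring
  have hD : H00 * (R ^ 6 / p ^ 6) * (9 / 512) * η = D := by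
    rw [hη]; ring
  rw [hC, (hasDerivAt_mul_sin_add_mul_sin _ _ 2 4 g).deriv]
  linear_combination (-D * cos (2 * g)) * mul_div_pow_succ_succ k A 0
    + (-D * cos (4 * g)) * mul_div_pow_succ_succ k B 1
    + (A / k * cos (2 * g) + B / k ^ 2 * cos (4 * g)) * hD

/-- (Choice of the second-order integration constant cancels the
long-period third-order terms.) -/
theorem second_order_constant_cancels_long_period
    (μ R L G s : ℝ)
    (hμ : 0 < μ) (hR : 0 < R) (hL : 0 < L) (hG0 : 0 < G) (hGL : G ≤ L)
    (hs : 5 * s ^ 2 - 4 ≠ 0)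
    (η e p H00 : ℝ)
    (hη : η = G / L)
    (he : e = Real.sqrt (1 - η ^ 2))
    (hp : p = G ^ 2 / μ)
    (hH00 : H00 = -μ ^ 2 / (2 * L ^ 2))
    (β₁₀ β₁₁ β₁₂ β₁₃ β₂₀ : ℝ)
    (hβ₁₀ : β₁₀ = 525 * s ^ 6 - 3930 * s ^ 4 + 5632 * s ^ 2 - 2256)
    (hβ₁₁ : β₁₁ = 5925 * s ^ 6 - 16170 * s ^ 4 + 14848 * s ^ 2 - 4560)
    (hβ₁₂ : β₁₂ = (14 - 15 * s ^ 2) * (75 * s ^ 4 - 212 * s ^ 2 + 120))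
    (hβ₁₃ : β₁₃ = (15 * s ^ 2 - 14) * (45 * s ^ 4 + 36 * s ^ 2 - 56))
    (hβ₂₀ : β₂₀ = (15 * s ^ 2 - 14) ^ 2 * (15 * s ^ 2 - 13))
    (C₂ : ℝ → ℝ)
    (hC₂ : ∀ g : ℝ, C₂ g =
      G * (R ^ 4 / p ^ 4) * (1 / 256) *
        ((s ^ 2 * e ^ 2 * (β₁₀ + β₁₁ * η + β₁₂ * η ^ 2 + β₁₃ * η ^ 3) /
            (2 * (5 * s ^ 2 - 4) ^ 2 * (1 + η))) * Real.sin (2 * g) +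
          (s ^ 4 * e ^ 4 * β₂₀ / (4 * (5 * s ^ 2 - 4) ^ 3)) * Real.sin (4 * g))) :
    ∀ g : ℝ,
      -H00 * (R ^ 2 / p ^ 2) * (9 / 2) * (5 * s ^ 2 - 4) * (1 / L) * deriv C₂ g +
        H00 * (R ^ 6 / p ^ 6) * (9 / 512) * η *
          ((s ^ 2 * e ^ 2 * (β₁₀ + β₁₁ * η + β₁₂ * η ^ 2 + β₁₃ * η ^ 3) /
              ((5 * s ^ 2 - 4) * (1 + η))) * Real.cos (2 * g) +
            (s ^ 4 * e ^ 4 * β₂₀ / (5 * s ^ 2 - 4) ^ 2) * Real.cos (4 * g))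
      = 0 :=
  second_order_constant_cancels_long_period_general R L G s η e p H00 hη β₁₀ β₁₁ β₁₂ β₁₃ β₂₀ C₂ hC₂
end
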